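/- The Haar functional is invariant under the antipode: h(S(a)) = h(a) for every a ∈ 𝒜. -/

import Mathlib

open scoped TensorProduct

noncomputable section

/-- The monomial family `α^n γ^m (γ*)^k` (for `n ≥ 0`) resp. `(α*)^{-n} γ^m (γ*)^k`
(for `n < 0`), indexed by `(n, m, k) ∈ ℤ × ℕ × ℕ`. -/
def suqMono {A : Type*} [Ring A] [StarRing A] (a g : A) (i : ℤ × ℕ × ℕ) : A :=
  (if 0 ≤ i.1 then a ^ i.1.toNat else (star a) ^ (-i.1).toNat) * g ^ i.2.1 * (star g) ^ i.2.2

/-- The degree-`p` homogeneous component `𝒜_p`: the `ℂ`-span of the basis monomials with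
`m - k = p`. -/
def suqHomog {A : Type*} [Ring A] [Algebra ℂ A] [StarRing A] (a g : A) (p : ℤ) :
    Submodule ℂ A :=
  Submodule.span ℂ
    {x | ∃ i : ℤ × ℕ × ℕ, (i.2.1 : ℤ) - (i.2.2 : ℤ) = p ∧ x = suqMono a g i}

/-- The defining relations of `Pol(SU_q(2))`. -/
def SUqRel {A : Type*} [Ring A] [Algebra ℂ A] [StarRing A] (q : ℂ) (a g : A) : Prop :=
  star a * a + star g * g = 1 ∧
  a * star a + ((‖q‖ : ℂ) ^ 2) • (star g * g) = 1 ∧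
  g * star g = star g * g ∧
  a * g = (starRingEnd ℂ q) • (g * a) ∧
  a * star g = q • (star g * a)

/-- The monomials form a `ℂ`-basis. -/
def SUqBasis {A : Type*} [Ring A] [Algebra ℂ A] [StarRing A] (a g : A) : Prop :=
  LinearIndependent ℂ (suqMono a g) ∧
  Submodule.span ℂ (Set.range (suqMono a g)) = ⊤

/-- The characterizing properties of the antipode `S`. -/
def SUqAntipode {A : Type*} [Ring A] [Algebra ℂ A] [StarRing A] (q : ℂ) (a g : A)
    (S : A →ₗ[ℂ] A) : Prop :=
  S 1 = 1 ∧ S a = star a ∧ S (star a) = a ∧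
  S g = (-(starRingEnd ℂ q)) • g ∧ S (star g) = (-q⁻¹) • star g ∧
  (∀ p : ℤ, ∀ x ∈ suqHomog a g p, S x ∈ suqHomog a g p) ∧
  (∀ p r : ℤ, ∀ x ∈ suqHomog a g p, ∀ y ∈ suqHomog a g r,
    S (x * y) = ((q / starRingEnd ℂ q) ^ (-(p * r))) • (S y * S x))

/-- The braided multiplication on `𝒜 ⊗ 𝒜`. -/
def SUqBraidedMul {A : Type*} [Ring A] [Algebra ℂ A] [StarRing A] (q : ℂ) (a g : A)
    (μ : A ⊗[ℂ] A →ₗ[ℂ] A ⊗[ℂ] A →ₗ[ℂ] A ⊗[ℂ] A) : Prop :=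
  ∀ (x w : A) (r s : ℤ), ∀ y ∈ suqHomog a g r, ∀ z ∈ suqHomog a g s,
    μ (x ⊗ₜ[ℂ] y) (z ⊗ₜ[ℂ] w)
      = ((q / starRingEnd ℂ q) ^ (-(r * s))) • ((x * z) ⊗ₜ[ℂ] (y * w))

/-- The characterizing properties of the comultiplication `Δ` (as a unital algebra
homomorphism into the braided tensor square with multiplication `μ`). -/
def SUqComul {A : Type*} [Ring A] [Algebra ℂ A] [StarRing A] (q : ℂ) (a g : A)
    (μ : A ⊗[ℂ] A →ₗ[ℂ] A ⊗[ℂ] A →ₗ[ℂ] A ⊗[ℂ] A) (Δ : A →ₗ[ℂ] A ⊗[ℂ] A) : Prop :=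
  Δ 1 = 1 ⊗ₜ[ℂ] 1 ∧ (∀ x y : A, Δ (x * y) = μ (Δ x) (Δ y)) ∧
  Δ a = a ⊗ₜ[ℂ] a - q • ((star g) ⊗ₜ[ℂ] g) ∧
  Δ g = g ⊗ₜ[ℂ] a + (star a) ⊗ₜ[ℂ] g ∧
  Δ (star a) = (star a) ⊗ₜ[ℂ] (star a) - q • (g ⊗ₜ[ℂ] (star g)) ∧
  Δ (star g) = (star g) ⊗ₜ[ℂ] (star a) + a ⊗ₜ[ℂ] (star g)

/-- The braided flip `c` on `𝒜 ⊗ 𝒜`. -/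
def SUqFlip {A : Type*} [Ring A] [Algebra ℂ A] [StarRing A] (q : ℂ) (a g : A)
    (c : A ⊗[ℂ] A →ₗ[ℂ] A ⊗[ℂ] A) : Prop :=
  ∀ (p r : ℤ), ∀ x ∈ suqHomog a g p, ∀ y ∈ suqHomog a g r,
    c (x ⊗ₜ[ℂ] y) = ((q / starRingEnd ℂ q) ^ (-(p * r))) • (y ⊗ₜ[ℂ] x)

/-- The Haar functional, defined on the basis. -/
def SUqHaar {A : Type*} [Ring A] [Algebra ℂ A] [StarRing A] (q : ℂ) (a g : A)
    (h : A →ₗ[ℂ] ℂ) : Prop :=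
  ∀ i : ℤ × ℕ × ℕ, h (suqMono a g i) =
    if i.1 = 0 ∧ i.2.1 = i.2.2
    then (1 - (‖q‖ : ℂ) ^ 2) / (1 - (‖q‖ : ℂ) ^ (2 * (i.2.1 + 1)))
    else 0

/-! The Haar functional vanishes on every basis monomial except `(γγ*)^m`, and `S` fixes
`(γγ*)^m`. Since `S` preserves the degree `m - k`, and reverses products without a twist when
one factor has degree `0`, it sends `α^N (γγ*)^m` to `(γγ*)^m (α*)^N`; `q`-commuting the factors
turns this into a multiple of the monomial `(α*)^N (γγ*)^m`, on which `h` vanishes as well (and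
symmetrically with `α` and `α*` exchanged). -/

section QCommute

variable {R A : Type*} [CommSemiring R] [Semiring A] [Algebra R A] {x y u v : A} {c d : R}

theorem pow_mul_eq_smul_mul_pow (h : y * x = c • (x * y)) (n : ℕ) :
    y ^ n * x = c ^ n • (x * y ^ n) := by
  induction n with
  | zero => simp
  | succ n ih =>
    rw [pow_succ, mul_assoc, h, mul_smul_comm, ← mul_assoc, ih, smul_mul_assoc, smul_smul,
      mul_assoc, ← pow_succ']

theorem mul_pow_eq_smul_pow_mul (h : y * x = c • (x * y)) (n : ℕ) :
    y * x ^ n = c ^ n • (x ^ n * y) := by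
  induction n with
  | zero => simp
  | succ n ih =>
    rw [pow_succ, ← mul_assoc, ih, smul_mul_assoc, mul_assoc, h, mul_smul_comm, smul_smul,
      ← mul_assoc, ← pow_succ, pow_succ]

theorem mul_mul_eq_smul_mul_mul (hu : u * x = c • (x * u)) (hv : v * x = d • (x * v)) :
    u * v * x = (c * d) • (x * (u * v)) := by
  rw [mul_assoc, hv, mul_smul_comm, ← mul_assoc, hu, smul_mul_assoc, smul_smul, mul_assoc,
    mul_comm d]

theorem pow_mul_pow_mul_pow_eq_smul (hu : u * x = c • (x * u)) (hv : v * x = d • (x * v))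
    (m k n : ℕ) :
    u ^ m * v ^ k * x ^ n = ((c ^ m * d ^ k) ^ n) • (x ^ n * (u ^ m * v ^ k)) :=
  mul_pow_eq_smul_pow_mul
    (mul_mul_eq_smul_mul_mul (pow_mul_eq_smul_mul_pow hu m) (pow_mul_eq_smul_mul_pow hv k)) n

end QCommute

section SUq

variable {A : Type*} [Ring A] [StarRing A]

theorem suqMono_natCast (a g : A) (n m k : ℕ) :
    suqMono a g (n, m, k) = a ^ n * (g ^ m * star g ^ k) := by
  simp [suqMono, mul_assoc]

theorem suqMono_neg_natCast (a g : A) (n m k : ℕ) :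
    suqMono a g (-n, m, k) = star a ^ n * (g ^ m * star g ^ k) := by
  rcases n with _ | n
  · simp [suqMono]
  · simp only [suqMono, mul_assoc]
    rw [if_neg (by omega)]
    norm_num

variable [Algebra ℂ A] {q : ℂ} {a g : A}

theorem suqMono_mem_suqHomog (a g : A) (i : ℤ × ℕ × ℕ) :
    suqMono a g i ∈ suqHomog a g ((i.2.1 : ℤ) - i.2.2) :=
  Submodule.subset_span ⟨i, rfl, rfl⟩

theorem pow_mul_pow_mem_suqHomog (a g : A) (m k : ℕ) :
    g ^ m * star g ^ k ∈ suqHomog a g ((m : ℤ) - k) := by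
  have h := suqMono_mem_suqHomog a g ((0 : ℕ), m, k)
  rwa [suqMono_natCast, pow_zero, one_mul] at h

theorem pow_mem_suqHomog_zero (a g : A) (n : ℕ) : a ^ n ∈ suqHomog a g 0 := by
  simpa [suqMono_natCast] using suqMono_mem_suqHomog a g (n, 0, 0)

theorem star_pow_mem_suqHomog_zero (a g : A) (n : ℕ) : star a ^ n ∈ suqHomog a g 0 := by
  simpa [suqMono_neg_natCast] using suqMono_mem_suqHomog a g (-n, 0, 0)

theorem SUqHaar.apply_eq_zero_of_mem {h : A →ₗ[ℂ] ℂ} (hh : SUqHaar q a g h) {p : ℤ}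
    (hp : p ≠ 0) {x : A} (hx : x ∈ suqHomog a g p) : h x = 0 := by
  suffices suqHomog a g p ≤ LinearMap.ker h from this hx
  rw [suqHomog, Submodule.span_le]
  rintro y ⟨⟨n, m, k⟩, hmk, rfl⟩
  rw [SetLike.mem_coe, LinearMap.mem_ker, hh, if_neg]
  rintro ⟨-, hmk'⟩
  exact hp (by simp only at hmk hmk'; omega)

theorem SUqHaar.apply_smul_suqMono_of_ne_zero {h : A →ₗ[ℂ] ℂ} (hh : SUqHaar q a g h)
    (c : ℂ) {i : ℤ × ℕ × ℕ} (hi : i.1 ≠ 0) : h (c • suqMono a g i) = 0 := by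
  rw [map_smul, hh, if_neg (fun h ↦ hi h.1), smul_zero]

section Antipode

variable {S : A →ₗ[ℂ] A} (hS : SUqAntipode q a g S)
include hS

theorem SUqAntipode.map_mul_of_mem_zero {r : ℤ} {x y : A} (hx : x ∈ suqHomog a g 0)
    (hy : y ∈ suqHomog a g r) : S (x * y) = S y * S x := by
  simpa using hS.2.2.2.2.2.2 0 r x hx y hy

theorem SUqAntipode.map_pow {x : A} (hx : ∀ n : ℕ, x ^ n ∈ suqHomog a g 0) (n : ℕ) :
    S (x ^ n) = S x ^ n := by
  induction n with
  | zero => simpa using hS.1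
  | succ n ih =>
    rw [pow_succ', hS.map_mul_of_mem_zero (by simpa using hx 1) (hx n), ih, pow_succ]

theorem SUqAntipode.map_mul_star (hq : q ≠ 0) (hgg : g * star g = star g * g) :
    S (g * star g) = g * star g := by
  obtain ⟨-, -, -, hSg, hSgs, -, hSmul⟩ := hS
  have hmem (k m : ℕ) := pow_mul_pow_mem_suqHomog a g k m
  rw [hSmul 1 (-1) g (by simpa using hmem 1 0) (star g) (by simpa using hmem 0 1), hSgs, hSg,
    smul_mul_smul_comm, smul_smul, ← hgg]
  have hq' : starRingEnd ℂ q ≠ 0 := by simpa using hq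
  rw [show (-(1 * -1 : ℤ)) = 1 by norm_num, zpow_one,
    show q / starRingEnd ℂ q * (-q⁻¹ * -starRingEnd ℂ q) = 1 by field_simp, one_smul]

theorem SUqAntipode.map_pow_mul_star_pow (hq : q ≠ 0) (hgg : g * star g = star g * g)
    (m : ℕ) : S (g ^ m * star g ^ m) = g ^ m * star g ^ m := by
  have hc : Commute g (star g) := hgg
  have hmem (n : ℕ) : (g * star g) ^ n ∈ suqHomog a g 0 := by
    simpa [hc.mul_pow] using pow_mul_pow_mem_suqHomog a g n n
  rw [← hc.mul_pow, hS.map_pow hmem, hS.map_mul_star hq hgg]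

theorem SUqAntipode.map_suqMono_natCast [StarModule ℂ A] (hq : q ≠ 0) (hrel : SUqRel q a g)
    (N m : ℕ) :
    S (suqMono a g (N, m, m)) =
      ((starRingEnd ℂ q ^ m * q ^ m) ^ N) • suqMono a g (-N, m, m) := by
  have hga : g * star a = starRingEnd ℂ q • (star a * g) := by
    simpa using congrArg star hrel.2.2.2.2
  have hsga : star g * star a = q • (star a * star g) := by
    simpa using congrArg star hrel.2.2.2.1
  rw [suqMono_natCast, hS.map_mul_of_mem_zero (pow_mem_suqHomog_zero a g N)
    (pow_mul_pow_mem_suqHomog a g m m), hS.map_pow_mul_star_pow hq hrel.2.2.1,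
    hS.map_pow (pow_mem_suqHomog_zero a g), hS.2.1, pow_mul_pow_mul_pow_eq_smul hga hsga,
    suqMono_neg_natCast]

theorem SUqAntipode.map_suqMono_neg_natCast (hq : q ≠ 0) (hrel : SUqRel q a g) (N m : ℕ) :
    S (suqMono a g (-N, m, m)) =
      (((starRingEnd ℂ q)⁻¹ ^ m * q⁻¹ ^ m) ^ N) • suqMono a g (N, m, m) := by
  have hq' : starRingEnd ℂ q ≠ 0 := by simpa using hq
  have hga : g * a = (starRingEnd ℂ q)⁻¹ • (a * g) := by
    rw [hrel.2.2.2.1, smul_smul, inv_mul_cancel₀ hq', one_smul]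
  have hsga : star g * a = q⁻¹ • (a * star g) := by
    rw [hrel.2.2.2.2, smul_smul, inv_mul_cancel₀ hq, one_smul]
  rw [suqMono_neg_natCast, hS.map_mul_of_mem_zero (star_pow_mem_suqHomog_zero a g N)
    (pow_mul_pow_mem_suqHomog a g m m), hS.map_pow_mul_star_pow hq hrel.2.2.1,
    hS.map_pow (star_pow_mem_suqHomog_zero a g), hS.2.2.1,
    pow_mul_pow_mul_pow_eq_smul hga hsga, suqMono_natCast]

theorem SUqAntipode.exists_map_suqMono_eq_smul [StarModule ℂ A] (hq : q ≠ 0)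
    (hrel : SUqRel q a g) (n : ℤ) (m : ℕ) :
    ∃ c : ℂ, S (suqMono a g (n, m, m)) = c • suqMono a g (-n, m, m) := by
  obtain ⟨N, rfl | rfl⟩ := n.eq_nat_or_neg
  · exact ⟨_, hS.map_suqMono_natCast hq hrel N m⟩
  · rw [neg_neg]
    exact ⟨_, hS.map_suqMono_neg_natCast hq hrel N m⟩

end Antipode

theorem SUqHaar.apply_antipode_suqMono [StarModule ℂ A] {S : A →ₗ[ℂ] A} {h : A →ₗ[ℂ] ℂ}
    (hh : SUqHaar q a g h) (hq : q ≠ 0) (hrel : SUqRel q a g) (hS : SUqAntipode q a g S)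
    (i : ℤ × ℕ × ℕ) : h (S (suqMono a g i)) = h (suqMono a g i) := by
  obtain ⟨n, m, k⟩ := i
  rcases eq_or_ne m k with rfl | hmk
  · rcases eq_or_ne n 0 with rfl | hn
    · have hmono : suqMono a g (0, m, m) = g ^ m * star g ^ m := by
        simpa using suqMono_natCast a g 0 m m
      rw [hmono, hS.map_pow_mul_star_pow hq hrel.2.2.1]
    · obtain ⟨c, hc⟩ := hS.exists_map_suqMono_eq_smul hq hrel n m
      rw [hc, hh.apply_smul_suqMono_of_ne_zero c (neg_ne_zero.mpr hn), hh,
        if_neg (fun h ↦ hn h.1)]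
  · have hp : (m : ℤ) - k ≠ 0 := by omega
    have hmem := suqMono_mem_suqHomog a g (n, m, k)
    rw [hh.apply_eq_zero_of_mem hp (hS.2.2.2.2.2.1 _ _ hmem), hh.apply_eq_zero_of_mem hp hmem]

end SUq

theorem suq_haar_antipode_invariant_general {A : Type*} [Ring A] [Algebra ℂ A] [StarRing A]
    [StarModule ℂ A]
    (q : ℂ) (hq0 : 0 < ‖q‖)
    (a g : A) (hrel : SUqRel q a g) (hbasis : SUqBasis a g)
    (S : A →ₗ[ℂ] A) (hS : SUqAntipode q a g S)
    (h : A →ₗ[ℂ] ℂ) (hh : SUqHaar q a g h) :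
    ∀ x : A, h (S x) = h x := by
  intro x
  have hinv : h ∘ₗ S = h :=
    LinearMap.ext_on_range hbasis.2 (hh.apply_antipode_suqMono (norm_pos_iff.mp hq0) hrel hS)
  exact LinearMap.congr_fun hinv x

/-- The Haar functional is invariant under the antipode:
`h(S(a)) = h(a)` for all `a ∈ 𝒜`. -/
theorem suq_haar_antipode_invariant {A : Type*} [Ring A] [Algebra ℂ A] [StarRing A]
    [StarModule ℂ A]
    (q : ℂ) (hq0 : 0 < ‖q‖) (hq1 : ‖q‖ < 1)
    (a g : A) (hrel : SUqRel q a g) (hbasis : SUqBasis a g)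
    (S : A →ₗ[ℂ] A) (hS : SUqAntipode q a g S)
    (h : A →ₗ[ℂ] ℂ) (hh : SUqHaar q a g h) :
    ∀ x : A, h (S x) = h x :=
  suq_haar_antipode_invariant_general q hq0 a g hrel hbasis S hS h hh
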